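/- arXiv:1311.3948 — 6 statements merged into one kernel-verified Lean document; each statement's English description precedes it below -/
import Mathlib

section
/- Let Q be a word of length m in the simple reflections of a finite Coxeter system (W,S), let Q' be obtained from Q by doubling the letter at position p (so the doubled positions of Q' are p and p+1), and let ρ ∈ W. Then for every face F of the subword complex Δ(Q',ρ), at least one of F ∪ {p} and F ∪ {p+1} is again a face of Δ(Q',ρ). Equivalently, Δ(Q',ρ) = (Lk_{Δ(Q',ρ)}({p}) ∗ {p+1}) ∪ (Lk_{Δ(Q',ρ)}({p+1}) ∗ {p}), where the join of a complex with a single vertex v consists of all faces σ and σ ∪ {v} for σ in the complex. -/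
/-!
A reduced word never contains two equal adjacent letters. Hence the reduced subword witnessing
a face `F` of `Δ(Q', ρ)` uses at most one of the two doubled positions, and the other one can be
added to `F`.
-/

namespace SubwordComplexNil

variable {B W : Type*} [Group W] {M : CoxeterMatrix B}

/-- The set of positions `P` in the word `Q : Fin m → B` contains an embedded reduced
expression of `ρ`. -/
def ContainsReduced (cs : CoxeterSystem M W) {m : ℕ} (Q : Fin m → B)
    (P : Finset (Fin m)) (ρ : W) : Prop :=
  ∃ I : Finset (Fin m), I ⊆ P ∧ I.card = cs.length ρ ∧
    cs.wordProd ((I.sort (· ≤ ·)).map Q) = ρ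

/-- `F` is a face of the subword complex `Δ(Q, ρ)`. -/
def IsFace (cs : CoxeterSystem M W) {m : ℕ} (Q : Fin m → B) (ρ : W)
    (F : Finset (Fin m)) : Prop :=
  ContainsReduced cs Q Fᶜ ρ

/-- The word obtained from `Q` by doubling the letter at position `p`.  The doubled
positions of the new word are `p.castSucc` and `p.succ`. -/
def doubleAt {m : ℕ} (Q : Fin m → B) (p : Fin m) (i : Fin (m + 1)) : B :=
  if h : (i : ℕ) ≤ (p : ℕ) then Q ⟨i, lt_of_le_of_lt h p.isLt⟩
  else Q ⟨(i : ℕ) - 1, by have := i.isLt; omega⟩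

theorem _root_.Fin.castSucc_covBy_succ {n : ℕ} (i : Fin n) : i.castSucc ⋖ i.succ :=
  ⟨Fin.castSucc_lt_succ, fun c h₁ h₂ => by
    rw [Fin.lt_def] at h₁ h₂
    simp only [Fin.val_castSucc, Fin.val_succ] at h₁ h₂
    omega⟩

theorem _root_.List.Pairwise.pair_infix_of_covBy {α : Type*} [Preorder α] {L : List α}
    (hL : L.Pairwise (· < ·)) {a b : α} (ha : a ∈ L) (hb : b ∈ L) (hab : a ⋖ b) :
    [a, b] <:+: L := by
  obtain ⟨s, t, rfl⟩ := List.append_of_mem ha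
  obtain ⟨-, hat, hsat⟩ := List.pairwise_append.mp hL
  obtain ⟨hat, ht⟩ := List.pairwise_cons.mp hat
  have hbt : b ∈ t := by
    rcases List.mem_append.mp hb with hbs | hbat
    · exact absurd (hsat b hbs a List.mem_cons_self) hab.lt.not_gt
    · rcases List.mem_cons.mp hbat with rfl | hbt
      · exact absurd hab.lt (lt_irrefl b)
      · exact hbt
  cases t with
  | nil => simp at hbt
  | cons c t =>
    obtain rfl : c = b := by
      rcases List.mem_cons.mp hbt with rfl | hbt
      · rfl
      · exact absurd ((List.pairwise_cons.mp ht).1 b hbt) (hab.2 (hat c List.mem_cons_self))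
    exact ⟨s, t, by simp⟩

theorem _root_.Finset.subset_compl_insert_of_notMem {α : Type*} [Fintype α] [DecidableEq α]
    {I F : Finset α} {a : α} (hIF : I ⊆ Fᶜ) (ha : a ∉ I) : I ⊆ (insert a F)ᶜ := by
  rw [Finset.compl_insert, Finset.subset_erase]
  exact ⟨hIF, ha⟩

theorem _root_.CoxeterSystem.not_isReduced_pair_self (cs : CoxeterSystem M W) (i : B) :
    ¬cs.IsReduced [i, i] := by
  simp [CoxeterSystem.IsReduced, cs.wordProd_cons, cs.simple_mul_simple_self, cs.length_one]

theorem _root_.CoxeterSystem.IsReduced.infix {cs : CoxeterSystem M W} {ω ω' : List B}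
    (hω : cs.IsReduced ω) (h : ω' <:+: ω) : cs.IsReduced ω' := by
  obtain ⟨s, t, rfl⟩ := h
  simpa using (hω.drop s.length).take ω'.length

theorem _root_.CoxeterSystem.IsReduced.notMem_or_notMem_of_covBy {cs : CoxeterSystem M W}
    {m : ℕ} {Q : Fin m → B} {I : Finset (Fin m)} (hI : cs.IsReduced ((I.sort (· ≤ ·)).map Q))
    {a b : Fin m} (hab : a ⋖ b) (hQ : Q a = Q b) : a ∉ I ∨ b ∉ I := by
  by_contra! h
  have hab_infix := I.sortedLT_sort.pairwise.pair_infix_of_covBy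
    ((Finset.mem_sort _).mpr h.1) ((Finset.mem_sort _).mpr h.2) hab
  have hred := hI.infix (hab_infix.map Q)
  rw [List.map_cons, List.map_cons, List.map_nil, hQ] at hred
  exact cs.not_isReduced_pair_self _ hred

theorem doubleAt_castSucc_eq_doubleAt_succ {m : ℕ} (Q : Fin m → B) (p : Fin m) :
    doubleAt Q p p.castSucc = doubleAt Q p p.succ := by
  simp [doubleAt]

theorem face_extends_to_doubled_position_general (cs : CoxeterSystem M W)
    {m : ℕ} (Q : Fin m → B) (p : Fin m) (ρ : W) (F : Finset (Fin (m + 1)))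
    (hF : IsFace cs (doubleAt Q p) ρ F) :
    IsFace cs (doubleAt Q p) ρ (insert p.castSucc F) ∨
      IsFace cs (doubleAt Q p) ρ (insert p.succ F) := by
  obtain ⟨I, hIF, hcard, hprod⟩ := hF
  have hred : cs.IsReduced ((I.sort (· ≤ ·)).map (doubleAt Q p)) := by
    rw [CoxeterSystem.IsReduced, hprod, List.length_map, Finset.length_sort, hcard]
  rcases hred.notMem_or_notMem_of_covBy (Fin.castSucc_covBy_succ p)
      (doubleAt_castSucc_eq_doubleAt_succ Q p) with h | h
  · exact Or.inl ⟨I, Finset.subset_compl_insert_of_notMem hIF h, hcard, hprod⟩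
  · exact Or.inr ⟨I, Finset.subset_compl_insert_of_notMem hIF h, hcard, hprod⟩

/-- For every face `F` of the subword complex of the doubled word, at least one of
`F ∪ {p}` and `F ∪ {p+1}` (where `p`, `p+1` are the doubled positions) is again a
face; i.e. `Δ(Q',ρ)` is the union of the joins of the links of the two doubled
vertices with the respectively opposite doubled vertex. -/
theorem face_extends_to_doubled_position [Finite W] (cs : CoxeterSystem M W)
    {m : ℕ} (Q : Fin m → B) (p : Fin m) (ρ : W) (F : Finset (Fin (m + 1)))
    (hF : IsFace cs (doubleAt Q p) ρ F) :
    IsFace cs (doubleAt Q p) ρ (insert p.castSucc F) ∨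
      IsFace cs (doubleAt Q p) ρ (insert p.succ F) :=
  face_extends_to_doubled_position_general cs Q p ρ F hF

end SubwordComplexNil
end

section
/- Let Q be a word of length m in the simple reflections of a finite Coxeter system (W,S), let Q' be obtained from Q by doubling the letter at position p (doubled positions p and p+1 of Q'), and let ρ ∈ W. Define φ' : {1,…,m} → {1,…,m+1} by φ'(i) = i for i < p, φ'(p) = p+1, φ'(i) = i+1 for i > p, and φ : {1,…,m} → {1,…,m+1} by φ(i) = i for i ≤ p, φ(i) = i+1 for i > p. Then for every G ⊆ {1,…,m}: G is a face of Δ(Q,ρ) if and only if φ'(G) ∪ {p} is a face of Δ(Q',ρ), and G is a face of Δ(Q,ρ) if and only if φ(G) ∪ {p+1} is a face of Δ(Q',ρ). That is, Δ(Q,ρ) is isomorphic both to Lk_{Δ(Q',ρ)}({p}) and to Lk_{Δ(Q',ρ)}({p+1}). -/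
namespace SubwordComplexNil

variable {B W : Type*} [Group W] {M : CoxeterMatrix B}

/-! Deleting either copy of the doubled letter of `Q'` gives back `Q`, and deleting a position
`c` is the order embedding `c.succAbove`. Order embeddings carry embedded reduced words to
embedded reduced words, so the faces of `Δ(Q, ρ)` correspond to the faces of `Δ(Q', ρ)` whose
complement avoids `c`, i.e. to the faces of the link of `{c}`. -/

lemma compl_insert_image_succAbove {m : ℕ} (c : Fin (m + 1)) (G : Finset (Fin m)) :
    (insert c (G.image c.succAbove))ᶜ = Gᶜ.image c.succAbove := by
  ext j
  rcases Fin.eq_self_or_eq_succAbove c j with rfl | ⟨i, rfl⟩ <;> simp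

lemma containsReduced_image_iff (cs : CoxeterSystem M W) {m n : ℕ} {Q : Fin m → B}
    {Q' : Fin n → B} {f : Fin m → Fin n} (hf : StrictMono f) (hQ : ∀ i, Q' (f i) = Q i)
    (P : Finset (Fin m)) (ρ : W) :
    ContainsReduced cs Q P ρ ↔ ContainsReduced cs Q' (P.image f) ρ := by
  have map_sort_image (I : Finset (Fin m)) :
      ((I.image f).sort (· ≤ ·)).map Q' = (I.sort (· ≤ ·)).map Q := by
    rw [show I.image f = I.map ⟨f, hf.injective⟩ by simp [Finset.map_eq_image],
      ← (hf.strictMonoOn _).map_finsetSort, List.map_map]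
    exact List.map_congr_left fun i _ => hQ i
  constructor
  · rintro ⟨I, hIP, hcard, hprod⟩
    refine ⟨I.image f, Finset.image_subset_image hIP, ?_, ?_⟩
    · rwa [Finset.card_image_of_injective _ hf.injective]
    · rwa [map_sort_image]
  · rintro ⟨J, hJP, hcard, hprod⟩
    obtain ⟨I, hIP, rfl⟩ := Finset.subset_image_iff.mp hJP
    refine ⟨I, hIP, ?_, ?_⟩
    · rwa [Finset.card_image_of_injective _ hf.injective] at hcard
    · rwa [map_sort_image] at hprod

lemma isFace_iff_isFace_insert_image_succAbove (cs : CoxeterSystem M W) {m : ℕ}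
    {Q : Fin m → B} {Q' : Fin (m + 1) → B} {c : Fin (m + 1)}
    (hQ : ∀ i, Q' (c.succAbove i) = Q i) (ρ : W) (G : Finset (Fin m)) :
    IsFace cs Q ρ G ↔ IsFace cs Q' ρ (insert c (G.image c.succAbove)) := by
  rw [IsFace, IsFace, compl_insert_image_succAbove]
  exact containsReduced_image_iff cs (Fin.strictMono_succAbove c) hQ Gᶜ ρ

@[simp]
lemma doubleAt_castSucc_succAbove {m : ℕ} (Q : Fin m → B) (p i : Fin m) :
    doubleAt Q p (p.castSucc.succAbove i) = Q i := by
  simp only [doubleAt, Fin.succAbove, Fin.lt_def]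
  split_ifs <;> first | rfl | (congr 1; ext; simp at *; omega) | (exfalso; simp at *; omega)

@[simp]
lemma doubleAt_succ_succAbove {m : ℕ} (Q : Fin m → B) (p i : Fin m) :
    doubleAt Q p (p.succ.succAbove i) = Q i := by
  simp only [doubleAt, Fin.succAbove, Fin.lt_def]
  split_ifs <;> first | rfl | (congr 1; ext; simp at *; omega) | (exfalso; simp at *; omega)

/-- In the notation of the paper, `φ' = p.castSucc.succAbove` and `φ = p.succ.succAbove`. -/
theorem link_of_doubled_positions_general (cs : CoxeterSystem M W)
    {m : ℕ} (Q : Fin m → B) (p : Fin m) (ρ : W) (G : Finset (Fin m)) :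
    (IsFace cs Q ρ G ↔
      IsFace cs (doubleAt Q p) ρ (insert p.castSucc (G.image p.castSucc.succAbove))) ∧
    (IsFace cs Q ρ G ↔
      IsFace cs (doubleAt Q p) ρ (insert p.succ (G.image p.succ.succAbove))) :=
  ⟨isFace_iff_isFace_insert_image_succAbove cs (doubleAt_castSucc_succAbove Q p) ρ G,
    isFace_iff_isFace_insert_image_succAbove cs (doubleAt_succ_succAbove Q p) ρ G⟩

/-- `Δ(Q, ρ)` is isomorphic both to the link of the first doubled vertex and to the
link of the second doubled vertex in `Δ(Q', ρ)`: here `φ' = (p.castSucc).succAbove`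
(the order embedding of the old positions omitting the first doubled position) and
`φ = (p.succ).succAbove` (the one omitting the second doubled position). -/
theorem link_of_doubled_positions [Finite W] (cs : CoxeterSystem M W)
    {m : ℕ} (Q : Fin m → B) (p : Fin m) (ρ : W) (G : Finset (Fin m)) :
    (IsFace cs Q ρ G ↔
      IsFace cs (doubleAt Q p) ρ (insert p.castSucc (G.image p.castSucc.succAbove))) ∧
    (IsFace cs Q ρ G ↔
      IsFace cs (doubleAt Q p) ρ (insert p.succ (G.image p.succ.succAbove))) :=
  link_of_doubled_positions_general cs Q p ρ G

end SubwordComplexNil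
end

section
/- Let Q be a word of length m in the simple reflections of a finite Coxeter system (W,S), let Q' be obtained from Q by doubling the letter at position p (doubled positions p and p+1 of Q'), and let ρ ∈ W. Let ψ : {1,…,m} \ {p} → {1,…,m+1} \ {p,p+1} be the order-preserving bijection (ψ(i) = i for i < p, ψ(i) = i+1 for i > p). Then for every F ⊆ {1,…,m+1}, writing σ = ψ^{-1}(F \ {p,p+1}) ⊆ {1,…,m} \ {p}: (i) if F contains at most one of p, p+1, then F is a face of Δ(Q',ρ) if and only if σ is a face of Δ(Q,ρ); (ii) if F contains both p and p+1, then F is a face of Δ(Q',ρ) if and only if σ ∪ {p} is a face of Δ(Q,ρ). -/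
/-!
Write `Q'` for the doubled word and `a = p.castSucc`, `b = p.succ`. The letters of `Q'` at the
adjacent positions `a` and `b` coincide, so no reduced subword of `Q'` uses both of them; hence
every reduced subword of `Q'` lies in the image of one of the order embeddings
`a.succAbove, b.succAbove : Fin m → Fin (m + 1)`, along both of which `Q'` restricts to `Q`.
Thus `Q'` contains a reduced expression of `ρ` inside `Fᶜ` iff `Q` contains one inside
the preimage of `Fᶜ` under one of the two embeddings, and that preimage is `σᶜ` or
`(σ ∪ {p})ᶜ` according to whether the embedding sends `p` outside `F` or into `F`.
-/

namespace SubwordComplexNil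

variable {B W : Type*} [Group W] {M : CoxeterMatrix B}

theorem _root_.List.Pairwise.infix_of_covBy {α : Type*} [Preorder α] {a b : α} :
    ∀ {L : List α}, L.Pairwise (· < ·) → a ∈ L → b ∈ L → a ⋖ b → [a, b] <:+: L
  | [], _, ha, _, _ => absurd ha List.not_mem_nil
  | x :: L, hL, ha, hb, hab => by
    rw [List.pairwise_cons] at hL
    rcases List.mem_cons.1 ha with rfl | ha
    · obtain _ | ⟨y, L'⟩ := L
      · simp only [List.mem_singleton] at hb
        exact absurd hab.lt (hb ▸ lt_irrefl b)
      · rcases List.mem_cons.1 (List.mem_of_ne_of_mem hab.lt.ne' hb) with rfl | hb'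
        · exact (List.prefix_append [a, b] L').isInfix
        · exact absurd ((List.pairwise_cons.1 hL.2).1 b hb')
            (hab.2 (hL.1 y List.mem_cons_self))
    · have hb : b ∈ L := List.mem_of_ne_of_mem
        (fun hbx : b = x => lt_asymm (hL.1 a ha) (hbx ▸ hab.lt)) hb
      exact List.infix_cons (hL.2.infix_of_covBy ha hb hab)

theorem _root_.CoxeterSystem.IsReduced.not_pair_infix {cs : CoxeterSystem M W} {ω : List B}
    (hω : cs.IsReduced ω) (i : B) : ¬[i, i] <:+: ω := by
  rintro ⟨l₁, l₂, rfl⟩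
  have := (hω.drop l₁.length).take 2
  simp [CoxeterSystem.IsReduced, cs.wordProd_cons] at this

theorem ContainsReduced.mono {cs : CoxeterSystem M W} {n : ℕ} {Q : Fin n → B}
    {P P' : Finset (Fin n)} {ρ : W} (h : ContainsReduced cs Q P ρ) (hPP' : P ⊆ P') :
    ContainsReduced cs Q P' ρ :=
  let ⟨I, hIP, hI⟩ := h
  ⟨I, hIP.trans hPP', hI⟩

def IsReducedSubword (cs : CoxeterSystem M W) {n : ℕ} (Q : Fin n → B) (I : Finset (Fin n))
    (ρ : W) : Prop :=
  I.card = cs.length ρ ∧ cs.wordProd ((I.sort (· ≤ ·)).map Q) = ρ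

section IsReducedSubword

variable {cs : CoxeterSystem M W} {n : ℕ} {Q : Fin n → B} {I : Finset (Fin n)} {ρ : W}

theorem IsReducedSubword.isReduced (h : IsReducedSubword cs Q I ρ) :
    cs.IsReduced ((I.sort (· ≤ ·)).map Q) := by
  rw [CoxeterSystem.IsReduced, h.2, List.length_map, Finset.length_sort, h.1]

theorem IsReducedSubword.not_castSucc_and_succ {Q : Fin (n + 1) → B} {I : Finset (Fin (n + 1))}
    (h : IsReducedSubword cs Q I ρ) {k : Fin n} (hk : Q k.castSucc = Q k.succ) :
    ¬(k.castSucc ∈ I ∧ k.succ ∈ I) := by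
  rintro ⟨h₁, h₂⟩
  have hcov : k.castSucc ⋖ k.succ :=
    ⟨Fin.castSucc_lt_succ, fun c h₁ h₂ => (Fin.castSucc_lt_iff_succ_le.1 h₁).not_gt h₂⟩
  have hinfix := ((Finset.sortedLT_sort I).pairwise.infix_of_covBy
    ((Finset.mem_sort _).2 h₁) ((Finset.mem_sort _).2 h₂) hcov).map Q
  rw [List.map_cons, List.map_cons, List.map_nil, hk] at hinfix
  exact h.isReduced.not_pair_infix _ hinfix

theorem isReducedSubword_map_iff {n' : ℕ} {Q' : Fin n' → B} (e : Fin n ↪o Fin n')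
    (hQ : ∀ i, Q' (e i) = Q i) :
    IsReducedSubword cs Q' (I.map e.toEmbedding) ρ ↔ IsReducedSubword cs Q I ρ := by
  rw [IsReducedSubword, IsReducedSubword, Finset.card_map, ← Finset.map_sort e.toEmbedding I
    (· ≤ ·) (· ≤ ·) (fun a _ b _ => e.le_iff_le.symm), List.map_map]
  simp only [RelEmbedding.coe_toEmbedding, Function.comp_def, hQ]

end IsReducedSubword

section Doubling

variable {m : ℕ} (Q : Fin m → B) (p : Fin m)

theorem doubleAt_eq_comp_predAbove : doubleAt Q p = Q ∘ p.predAbove := by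
  funext i
  rw [doubleAt, Function.comp_apply]
  split_ifs with h
  · rw [Fin.predAbove_of_le_castSucc _ _ (Fin.le_def.2 h)]; rfl
  · rw [Fin.predAbove_of_castSucc_lt _ _ (Fin.lt_def.2 (not_le.1 h))]; rfl

theorem succ_succAbove_of_ne {j : Fin m} (hj : j ≠ p) :
    p.succ.succAbove j = p.castSucc.succAbove j := by
  rcases lt_or_gt_of_ne hj with h | h
  · rw [Fin.succAbove_castSucc_of_lt _ _ h, Fin.succAbove_of_castSucc_lt _ _
      (Fin.castSucc_lt_succ_iff.2 h.le)]
  · rw [Fin.succAbove_castSucc_of_le _ _ h.le, Fin.succAbove_of_le_castSucc _ _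
      (Fin.succ_le_castSucc_iff.2 h)]

variable {p} {d : Fin (m + 1)}

theorem predAbove_succAbove_of_doubled (hd : d = p.castSucc ∨ d = p.succ) (j : Fin m) :
    p.predAbove (d.succAbove j) = j := by
  rcases hd with rfl | rfl
  · exact Fin.predAbove_succAbove p j
  · rcases eq_or_ne j p with rfl | hj
    · simp
    · rw [succ_succAbove_of_ne p hj, Fin.predAbove_succAbove]

theorem succAbove_self_of_doubled (hd : d = p.castSucc ∨ d = p.succ) :
    d.succAbove p = p.castSucc ∨ d.succAbove p = p.succ := by
  rcases hd with rfl | rfl <;> simp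

theorem doubleAt_succAbove (hd : d = p.castSucc ∨ d = p.succ) (j : Fin m) :
    doubleAt Q p (d.succAbove j) = Q j := by
  rw [doubleAt_eq_comp_predAbove, Function.comp_apply, predAbove_succAbove_of_doubled hd]

variable (p)

theorem doubleAt_castSucc_eq_succ : doubleAt Q p p.castSucc = doubleAt Q p p.succ := by
  simpa using (doubleAt_succAbove Q (d := p.succ) (.inr rfl) p).trans
    (doubleAt_succAbove Q (d := p.castSucc) (.inl rfl) p).symm

theorem containsReduced_doubleAt_iff {cs : CoxeterSystem M W} {P : Finset (Fin (m + 1))}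
    {ρ : W} :
    ContainsReduced cs (doubleAt Q p) P ρ ↔ ∃ d, (d = p.castSucc ∨ d = p.succ) ∧
      ContainsReduced cs Q (P.preimage d.succAbove Fin.succAbove_right_injective.injOn) ρ := by
  constructor
  · rintro ⟨I, hIP, hI⟩
    have hI : IsReducedSubword cs (doubleAt Q p) I ρ := hI
    obtain ⟨d, hd, hdI⟩ : ∃ d, (d = p.castSucc ∨ d = p.succ) ∧ d ∉ I := by
      by_contra! h
      exact hI.not_castSucc_and_succ (doubleAt_castSucc_eq_succ Q p)
        ⟨h _ (.inl rfl), h _ (.inr rfl)⟩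
    obtain ⟨J, -, rfl⟩ := (Finset.subset_map_iff (t := Finset.univ)
      (f := d.succAboveOrderEmb.toEmbedding)).1 fun i hi => by
        obtain ⟨j, rfl⟩ := Fin.exists_succAbove_eq (ne_of_mem_of_not_mem hi hdI)
        exact Finset.mem_map_of_mem _ (Finset.mem_univ j)
    refine ⟨d, hd, J, ?_, ?_⟩
    · exact fun j hj => Finset.mem_preimage.2 (hIP (Finset.mem_map_of_mem _ hj))
    · exact (isReducedSubword_map_iff d.succAboveOrderEmb (doubleAt_succAbove Q hd)).1 hI
  · rintro ⟨d, hd, J, hJP, hJ⟩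
    refine ⟨J.map d.succAboveOrderEmb.toEmbedding, fun i hi => ?_,
      (isReducedSubword_map_iff d.succAboveOrderEmb (doubleAt_succAbove Q hd)).2 hJ⟩
    obtain ⟨j, hj, rfl⟩ := Finset.mem_map.1 hi
    exact Finset.mem_preimage.1 (hJP hj)

end Doubling

section Faces

variable {m : ℕ} {p : Fin m} {F : Finset (Fin (m + 1))}

theorem mem_preimage_sdiff_doubled {j : Fin m} :
    j ∈ (F \ {p.castSucc, p.succ}).preimage p.castSucc.succAbove
      Fin.succAbove_right_injective.injOn ↔ j ≠ p ∧ p.castSucc.succAbove j ∈ F := by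
  simp only [Finset.mem_preimage, Finset.mem_sdiff, Finset.mem_insert, Finset.mem_singleton,
    ← Fin.succAbove_castSucc_self, Fin.succAbove_right_inj, Fin.succAbove_ne, false_or]
  tauto

theorem preimage_compl_succAbove_of_doubled {d : Fin (m + 1)} (hd : d = p.castSucc ∨ d = p.succ) :
    Fᶜ.preimage d.succAbove Fin.succAbove_right_injective.injOn =
      if d.succAbove p ∈ F then
        (insert p ((F \ {p.castSucc, p.succ}).preimage p.castSucc.succAbove
          Fin.succAbove_right_injective.injOn))ᶜ
      else ((F \ {p.castSucc, p.succ}).preimage p.castSucc.succAbove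
          Fin.succAbove_right_injective.injOn)ᶜ := by
  ext j
  have hψ : j ≠ p → d.succAbove j = p.castSucc.succAbove j := fun hj => by
    rcases hd with rfl | rfl
    exacts [rfl, succ_succAbove_of_ne p hj]
  rw [Finset.mem_preimage, Finset.mem_compl]
  split_ifs with hF <;>
    simp only [Finset.mem_compl, Finset.mem_insert, mem_preimage_sdiff_doubled] <;>
    rcases eq_or_ne j p with rfl | hj <;> simp [*]

end Faces

theorem faces_of_doubled_word_general (cs : CoxeterSystem M W)
    {m : ℕ} (Q : Fin m → B) (p : Fin m) (ρ : W) (F : Finset (Fin (m + 1))) :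
    (¬(p.castSucc ∈ F ∧ p.succ ∈ F) →
      (IsFace cs (doubleAt Q p) ρ F ↔
        IsFace cs Q ρ ((F \ {p.castSucc, p.succ}).preimage p.castSucc.succAbove
          (Fin.succAbove_right_injective.injOn)))) ∧
    ((p.castSucc ∈ F ∧ p.succ ∈ F) →
      (IsFace cs (doubleAt Q p) ρ F ↔
        IsFace cs Q ρ (insert p ((F \ {p.castSucc, p.succ}).preimage
          p.castSucc.succAbove (Fin.succAbove_right_injective.injOn))))) := by
  simp only [IsFace, containsReduced_doubleAt_iff]
  refine ⟨fun hF => ⟨?_, fun h => ?_⟩, fun hF => ⟨?_, fun h => ?_⟩⟩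
  · rintro ⟨d, hd, h⟩
    rw [preimage_compl_succAbove_of_doubled hd] at h
    split_ifs at h
    exacts [h.mono (Finset.compl_subset_compl.2 (Finset.subset_insert _ _)), h]
  · by_cases ha : p.castSucc ∈ F
    · refine ⟨p.castSucc, .inl rfl, ?_⟩
      rwa [preimage_compl_succAbove_of_doubled (.inl rfl),
        if_neg (by simpa using fun hb => hF ⟨ha, hb⟩)]
    · refine ⟨p.succ, .inr rfl, ?_⟩
      rwa [preimage_compl_succAbove_of_doubled (.inr rfl), if_neg (by simpa using ha)]
  · rintro ⟨d, hd, h⟩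
    rwa [preimage_compl_succAbove_of_doubled hd,
      if_pos ((succAbove_self_of_doubled hd).elim (· ▸ hF.1) (· ▸ hF.2))] at h
  · refine ⟨p.castSucc, .inl rfl, ?_⟩
    rwa [preimage_compl_succAbove_of_doubled (.inl rfl), if_pos (by simpa using hF.2)]

/-- Complete description of the faces of `Δ(Q', ρ)` for the doubled word `Q'`.  The
order-preserving bijection `ψ` from the old positions other than `p` onto the new
positions other than the two doubled ones is realized by `(p.castSucc).succAbove`, and
`σ = ψ⁻¹(F \ {p, p+1})`.  (i) If `F` contains at most one of the doubled positions,
then `F` is a face of `Δ(Q', ρ)` iff `σ` is a face of `Δ(Q, ρ)`.  (ii) If `F` contains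
both, then `F` is a face of `Δ(Q', ρ)` iff `σ ∪ {p}` is a face of `Δ(Q, ρ)`. -/
theorem faces_of_doubled_word [Finite W] (cs : CoxeterSystem M W)
    {m : ℕ} (Q : Fin m → B) (p : Fin m) (ρ : W) (F : Finset (Fin (m + 1))) :
    (¬(p.castSucc ∈ F ∧ p.succ ∈ F) →
      (IsFace cs (doubleAt Q p) ρ F ↔
        IsFace cs Q ρ ((F \ {p.castSucc, p.succ}).preimage p.castSucc.succAbove
          (Fin.succAbove_right_injective.injOn)))) ∧
    ((p.castSucc ∈ F ∧ p.succ ∈ F) →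
      (IsFace cs (doubleAt Q p) ρ F ↔
        IsFace cs Q ρ (insert p ((F \ {p.castSucc, p.succ}).preimage
          p.castSucc.succAbove (Fin.succAbove_right_injective.injOn))))) :=
  faces_of_doubled_word_general cs Q p ρ F

end SubwordComplexNil
end

section
/- Let K be a simplicial complex on a vertex set V and let a, b, c be three distinct elements not in V. Let E denote the full edge complex {∅, {a}, {b}, {a,b}} and let K ∗ E be the join of K and E. Then the edge subdivision of K ∗ E along the edge {a,b} with new vertex c is equal to the join (cone_c(K)) ∗ {∅, {a}, {b}}, i.e. the suspension with suspension vertices a, b of the cone over K with apex c, where cone_c(K) = {σ : σ ∈ K} ∪ {σ ∪ {c} : σ ∈ K}. -/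
namespace SubwordComplexNil

variable {U : Type*} [DecidableEq U]

/-- The join of two simplicial complexes (given as sets of faces on a common ambient
vertex type, with disjoint vertex sets). -/
def Join (X Y : Set (Finset U)) : Set (Finset U) :=
  {F | ∃ σ ∈ X, ∃ τ ∈ Y, F = σ ∪ τ}

/-- The link of a face `η` in a simplicial complex `X`. -/
def LinkSet (X : Set (Finset U)) (η : Finset U) : Set (Finset U) :=
  {τ | η ∪ τ ∈ X ∧ Disjoint η τ}

/-- The edge subdivision of `X` along the edge `{s, t}` with new vertex `r`. -/
def SubdivSet (X : Set (Finset U)) (s t r : U) : Set (Finset U) :=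
  {F | F ∈ X ∧ ¬ {s, t} ⊆ F} ∪
    {F | ∃ σ ∈ LinkSet X {s, t},
      F = insert r σ ∨ F = insert r (insert s σ) ∨ F = insert r (insert t σ)}

/-- The cone over `X` with apex `c`. -/
def Cone (X : Set (Finset U)) (c : U) : Set (Finset U) :=
  {F | ∃ σ ∈ X, F = σ ∨ F = insert c σ}

/-! The link of the edge `{a, b}` in `K ∗ 2^{a,b}` is `K` itself, and the faces not containing
the edge form `K ∗ {∅, {a}, {b}}`. Subdividing therefore adds exactly the faces `c ∪ G` with
`G ∈ K ∗ {∅, {a}, {b}}`, and these together with `K ∗ {∅, {a}, {b}}` are the faces of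
`cone_c(K) ∗ {∅, {a}, {b}}`. -/

theorem _root_.Finset.subset_pair_iff_eq {τ : Finset U} {a b : U} :
    τ ⊆ {a, b} ↔ τ = ∅ ∨ τ = {a} ∨ τ = {b} ∨ τ = {a, b} := by
  grind

theorem subdivSet_eq_union_image_insert (X : Set (Finset U)) (s t r : U) :
    SubdivSet X s t r = {F | F ∈ X ∧ ¬ {s, t} ⊆ F} ∪
      insert r '' Join (LinkSet X {s, t}) {∅, {s}, {t}} := by
  ext F
  simp only [SubdivSet, Join, Set.mem_union, Set.mem_ofPred_eq, Set.mem_image,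
    Set.mem_insert_iff, Set.mem_singleton_iff]
  refine or_congr_right ⟨?_, ?_⟩
  · rintro ⟨σ, hσ, rfl | rfl | rfl⟩
    exacts [⟨_, ⟨σ, hσ, ∅, .inl rfl, rfl⟩, by simp⟩,
      ⟨_, ⟨σ, hσ, {s}, .inr (.inl rfl), rfl⟩, by simp⟩,
      ⟨_, ⟨σ, hσ, {t}, .inr (.inr rfl), rfl⟩, by simp⟩]
  · rintro ⟨_, ⟨σ, hσ, _, rfl | rfl | rfl, rfl⟩, rfl⟩
    exacts [⟨σ, hσ, .inl (by simp)⟩, ⟨σ, hσ, .inr (.inl (by simp))⟩,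
      ⟨σ, hσ, .inr (.inr (by simp))⟩]

theorem join_cone_eq_union_image_insert (X Y : Set (Finset U)) (c : U) :
    Join (Cone X c) Y = Join X Y ∪ insert c '' Join X Y := by
  ext F
  simp only [Join, Cone, Set.mem_union, Set.mem_ofPred_eq, Set.mem_image]
  constructor
  · rintro ⟨_, ⟨σ, hσ, rfl | rfl⟩, τ, hτ, rfl⟩
    exacts [.inl ⟨_, hσ, τ, hτ, rfl⟩, .inr ⟨_, ⟨σ, hσ, τ, hτ, rfl⟩, (Finset.insert_union ..).symm⟩]
  · rintro (⟨σ, hσ, τ, hτ, rfl⟩ | ⟨_, ⟨σ, hσ, τ, hτ, rfl⟩, rfl⟩)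
    exacts [⟨σ, ⟨σ, hσ, .inl rfl⟩, τ, hτ, rfl⟩,
      ⟨insert c σ, ⟨σ, hσ, .inr rfl⟩, τ, hτ, (Finset.insert_union ..).symm⟩]

section EdgeJoin

variable {X : Set (Finset U)} {a b : U}

theorem linkSet_join_subsets_pair (hX : ∀ σ ∈ X, Disjoint {a, b} σ) :
    LinkSet (Join X {F | F ⊆ {a, b}}) {a, b} = X := by
  ext τ
  constructor
  · rintro ⟨⟨σ, hσ, ρ, hρ, heq⟩, hτ⟩
    suffices τ = σ from this ▸ hσ
    ext x
    by_cases hx : x ∈ ({a, b} : Finset U)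
    · exact iff_of_false (Finset.disjoint_left.1 hτ hx) (Finset.disjoint_left.1 (hX σ hσ) hx)
    · have hxρ : x ∉ ρ := fun h => hx (hρ h)
      simpa only [Finset.mem_union, hx, hxρ, false_or, or_false] using Finset.ext_iff.1 heq x
  · intro hτ
    exact ⟨⟨τ, hτ, {a, b}, Finset.Subset.refl _, Finset.union_comm ..⟩, hX τ hτ⟩

theorem join_subsets_pair_sep_not_pair_subset (hab : a ≠ b) (hX : ∀ σ ∈ X, Disjoint {a, b} σ) :
    {F | F ∈ Join X {F | F ⊆ {a, b}} ∧ ¬ {a, b} ⊆ F} = Join X {∅, {a}, {b}} := by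
  ext F
  constructor
  · rintro ⟨⟨σ, hσ, ρ, hρ, rfl⟩, hF⟩
    refine ⟨σ, hσ, ρ, ?_, rfl⟩
    rcases Finset.subset_pair_iff_eq.1 hρ with rfl | rfl | rfl | rfl
    exacts [.inl rfl, .inr (.inl rfl), .inr (.inr rfl), absurd Finset.subset_union_right hF]
  · rintro ⟨σ, hσ, ρ, hρ, rfl⟩
    have ⟨ha, hb⟩ : a ∉ σ ∧ b ∉ σ := by simpa using hX σ hσ
    refine ⟨⟨σ, hσ, ρ, ?_, rfl⟩, fun h => ?_⟩
    · rcases hρ with rfl | rfl | rfl <;> simp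
    · have := Finset.insert_subset_iff.1 h
      rcases hρ with rfl | rfl | rfl <;> simp_all

end EdgeJoin

theorem subdivision_of_join_edge_eq_suspension_of_cone_general {V : Type*} [DecidableEq V]
    (K : Set (Finset V)) :
    SubdivSet
      (Join {F : Finset (V ⊕ Fin 3) | ∃ σ ∈ K, F = σ.image Sum.inl}
        {F : Finset (V ⊕ Fin 3) | F ⊆ {Sum.inr 0, Sum.inr 1}})
      (Sum.inr 0) (Sum.inr 1) (Sum.inr 2) =
    Join (Cone {F : Finset (V ⊕ Fin 3) | ∃ σ ∈ K, F = σ.image Sum.inl} (Sum.inr 2))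
      {(∅ : Finset (V ⊕ Fin 3)), {Sum.inr 0}, {Sum.inr 1}} := by
  have hdisj : ∀ σ ∈ {F : Finset (V ⊕ Fin 3) | ∃ σ ∈ K, F = σ.image Sum.inl},
      Disjoint {Sum.inr 0, Sum.inr 1} σ := by
    rintro _ ⟨σ, -, rfl⟩
    simp
  rw [subdivSet_eq_union_image_insert, linkSet_join_subsets_pair hdisj,
    join_subsets_pair_sep_not_pair_subset (by simp) hdisj, join_cone_eq_union_image_insert]

/-- Let `K` be a simplicial complex on a vertex set `V` and let `a`, `b`, `c` be three
distinct new vertices.  Then the edge subdivision of `K ∗ {∅,{a},{b},{a,b}}` along the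
edge `{a, b}` with new vertex `c` equals the join of the cone over `K` with apex `c`
and the complex `{∅, {a}, {b}}`, i.e. the suspension (with suspension vertices `a`,
`b`) of the cone over `K`. -/
theorem subdivision_of_join_edge_eq_suspension_of_cone {V : Type*} [DecidableEq V]
    (K : Set (Finset V)) (hK : ∀ σ ∈ K, ∀ τ ⊆ σ, τ ∈ K) :
    SubdivSet
      (Join {F : Finset (V ⊕ Fin 3) | ∃ σ ∈ K, F = σ.image Sum.inl}
        {F : Finset (V ⊕ Fin 3) | F ⊆ {Sum.inr 0, Sum.inr 1}})
      (Sum.inr 0) (Sum.inr 1) (Sum.inr 2) =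
    Join (Cone {F : Finset (V ⊕ Fin 3) | ∃ σ ∈ K, F = σ.image Sum.inl} (Sum.inr 2))
      {(∅ : Finset (V ⊕ Fin 3)), {Sum.inr 0}, {Sum.inr 1}} :=
  subdivision_of_join_edge_eq_suspension_of_cone_general K

end SubwordComplexNil
end

section
/- Let (W,S) be a finite Coxeter system, let Q be a word in the simple reflections S, and let ρ ∈ W. Then Q contains a reduced expression of ρ as a subword if and only if there exists a reduced word for the Demazure product δ(Q) that contains a reduced expression of ρ as a subword. -/
/-!
Write `≤` for the Bruhat order. By the subword property, a reduced word `D` contains a reduced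
expression of `ρ` iff `ρ ≤ π D`, so the right-hand side says `ρ ≤ δ(Q)`, and it remains to see
that `Q` contains a reduced expression of `ρ` iff `ρ ≤ δ(Q)`. When a letter `s` is appended to
`Q`, a reduced subword either avoids the new letter or ends with it (and then `ρ s < ρ`); this
matches the recursion for `δ` through the lifting property: if `w s < w`, then
`ρ ≤ w ↔ ρ ≤ w s ∨ (ρ s < ρ ∧ ρ s ≤ w s)`.

The strong exchange condition behind the subword property comes from Tits' reflection cocycle:
the parity of the number of occurrences of a reflection `t` in the right inversion sequence of a
word depends only on the product of the word.
-/

namespace SubwordComplexNil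

variable {B W : Type*} [Group W] {M : CoxeterMatrix B}

/-- One step of the Demazure product: multiply by the simple reflection `s i` if this
increases the length, otherwise do nothing. -/
noncomputable def demazureStep (cs : CoxeterSystem M W) (w : W) (i : B) : W :=
  if cs.length w < cs.length (w * cs.simple i) then w * cs.simple i else w

/-- The Demazure (0-Hecke) product of a word. -/
noncomputable def demazure (cs : CoxeterSystem M W) (Q : List B) : W :=
  Q.foldl (demazureStep cs) 1

/-- The word `Q` contains a reduced expression of `ρ` as a subword. -/
def ContainsReducedWord (cs : CoxeterSystem M W) (Q : List B) (ρ : W) : Prop :=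
  ∃ R : List B, R.Sublist Q ∧ R.length = cs.length ρ ∧ cs.wordProd R = ρ

open CoxeterSystem

section

variable (cs : CoxeterSystem M W)

local prefix:100 "σ" => cs.simple
local prefix:100 "π" => cs.wordProd
local prefix:100 "ℓ" => cs.length

theorem simple_mul_mul_simple_eq_iff (i : B) (t c : W) :
    σ i * t * σ i = c ↔ t = σ i * c * σ i := by
  constructor <;> rintro rfl <;> simp [mul_assoc]

section ReflectionCocycle

variable [DecidableEq W]

def reflPerm (i : B) : Equiv.Perm (W × ℤˣ) :=
  Function.Involutive.toPerm
    (fun p ↦ (σ i * p.1 * σ i, p.2 * if p.1 = σ i then -1 else 1)) <| by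
    rintro ⟨t, ε⟩
    by_cases ht : t = σ i
    · simp [ht]
    · simp [ht, mul_assoc, mul_eq_one_iff_eq_inv]

theorem reflPerm_apply (i : B) (t : W) (ε : ℤˣ) :
    reflPerm cs i (t, ε) = (σ i * t * σ i, ε * if t = σ i then -1 else 1) := rfl

theorem reflPerm_mul_pow_apply (i i' : B) (k : ℕ) (t : W) (ε : ℤˣ) :
    ((reflPerm cs i * reflPerm cs i') ^ k) (t, ε) =
      ((σ i * σ i') ^ k * t * (σ i' * σ i) ^ k,
        ε * ∏ j ∈ Finset.range (2 * k), if t = (σ i' * σ i) ^ j * σ i' then -1 else 1) := by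
  induction k generalizing t ε with
  | zero => simp
  | succ k ih =>
    have hconj (j : ℕ) : σ i * (σ i' * t * σ i') * σ i = (σ i' * σ i) ^ j * σ i' ↔
        t = (σ i' * σ i) ^ (j + 1 + 1) * σ i' := by
      rw [simple_mul_mul_simple_eq_iff, simple_mul_mul_simple_eq_iff, pow_succ', pow_succ]
      simp only [mul_assoc]
    rw [pow_succ, Equiv.Perm.mul_apply, Equiv.Perm.mul_apply, reflPerm_apply, reflPerm_apply, ih,
      pow_succ (σ i * σ i'), pow_succ' (σ i' * σ i), show 2 * (k + 1) = 2 * k + 1 + 1 by ring,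
      Finset.prod_range_succ', Finset.prod_range_succ']
    simp only [hconj, simple_mul_mul_simple_eq_iff, zero_add, pow_zero, pow_one, one_mul]
    ext
    · simp only [mul_assoc]
    · simp only [mul_assoc, Units.val_mul]
      ac_rfl

/- With `m = M i i'`, both `(s i * s i') ^ m` and `(s i' * s i) ^ m` are `1`, so the `2 * m`
sign factors repeat with period `m` and their product is a square. -/
theorem isLiftable_reflPerm : M.IsLiftable (reflPerm cs) := by
  intro i i'
  ext ⟨t, ε⟩ : 1
  rw [reflPerm_mul_pow_apply, cs.simple_mul_simple_pow, cs.simple_mul_simple_pow', two_mul,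
    Finset.prod_range_add]
  simp only [pow_add, cs.simple_mul_simple_pow', one_mul, mul_one, ← sq, Int.units_sq,
    Equiv.Perm.one_apply]

def reflRep : W →* Equiv.Perm (W × ℤˣ) := cs.lift ⟨reflPerm cs, isLiftable_reflPerm cs⟩

theorem reflRep_simple (i : B) : reflRep cs (σ i) = reflPerm cs i :=
  cs.lift_apply_simple (isLiftable_reflPerm cs) i

theorem reflRep_wordProd (ω : List B) (t : W) (ε : ℤˣ) :
    reflRep cs (π ω) (t, ε) =
      (π ω * t * (π ω)⁻¹, ε * (-1) ^ (cs.rightInvSeq ω).count t) := by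
  induction ω generalizing t ε with
  | nil => simp
  | cons i ω ih =>
    have hmem : π ω * t * (π ω)⁻¹ = σ i ↔ (π ω)⁻¹ * σ i * π ω = t :=
      ⟨fun h ↦ by rw [← h]; group, by rintro rfl; group⟩
    rw [cs.wordProd_cons, map_mul, Equiv.Perm.mul_apply, ih, reflRep_simple, reflPerm_apply,
      rightInvSeq, List.count_cons]
    simp only [hmem, beq_iff_eq, mul_inv_rev, inv_simple, Prod.mk.injEq]
    constructor
    · group
    · split_ifs <;> simp [pow_succ]

def reflSign (w t : W) : ℤˣ := (reflRep cs w (t, 1)).2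

theorem reflSign_wordProd (ω : List B) (t : W) :
    reflSign cs (π ω) t = (-1) ^ (cs.rightInvSeq ω).count t := by
  simp [reflSign, reflRep_wordProd]

theorem reflRep_apply (w t : W) (ε : ℤˣ) :
    reflRep cs w (t, ε) = (w * t * w⁻¹, ε * reflSign cs w t) := by
  obtain ⟨ω, rfl⟩ := cs.wordProd_surjective w
  rw [reflRep_wordProd, reflSign_wordProd]

theorem reflSign_mul (u v t : W) :
    reflSign cs (u * v) t = reflSign cs v t * reflSign cs u (v * t * v⁻¹) := by
  rw [reflSign, map_mul, Equiv.Perm.mul_apply, reflRep_apply cs v, reflRep_apply cs u, one_mul]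

theorem reflSign_one (t : W) : reflSign cs 1 t = 1 := by
  simpa using reflSign_wordProd cs [] t

theorem reflSign_self_of_isReflection {t : W} (ht : cs.IsReflection t) : reflSign cs t t = -1 := by
  obtain ⟨u, i, rfl⟩ := ht
  have hconj : u⁻¹ * (u * σ i * u⁻¹) * u⁻¹⁻¹ = σ i := by group
  have hsimple : reflSign cs (σ i) (σ i) = -1 := by
    simpa using reflSign_wordProd cs [i] (σ i)
  have hinv : reflSign cs u⁻¹ (u * σ i * u⁻¹) * reflSign cs u (σ i) = 1 := by
    have h := reflSign_mul cs u u⁻¹ (u * σ i * u⁻¹)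
    rwa [mul_inv_cancel, reflSign_one, hconj, eq_comm] at h
  rw [reflSign_mul cs (u * σ i) u⁻¹, hconj, reflSign_mul, hsimple, simple_mul_simple_self,
    one_mul, inv_simple, mul_left_comm, hinv, mul_one]

theorem mem_rightInvSeq_of_reflSign_eq_neg_one {ω : List B} {t : W}
    (h : reflSign cs (π ω) t = -1) : t ∈ cs.rightInvSeq ω := by
  rw [reflSign_wordProd] at h
  by_contra hmem
  rw [List.count_eq_zero_of_not_mem hmem, pow_zero] at h
  exact absurd h (by decide)

end ReflectionCocycle

theorem mem_rightInvSeq_of_isRightInversion {ω : List B} {t : W}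
    (h : cs.IsRightInversion (π ω) t) : t ∈ cs.rightInvSeq ω := by
  classical
  apply mem_rightInvSeq_of_reflSign_eq_neg_one
  by_contra hsign
  obtain ⟨ω', hω', hω'w⟩ := cs.exists_isReduced (π ω * t)
  have hsign' : reflSign cs (π ω') t = -1 := by
    rw [← hω'w, reflSign_mul, h.1.mul_self, one_mul, h.1.inv,
      reflSign_self_of_isReflection cs h.1,
      (Int.units_eq_one_or _).resolve_right hsign, mul_one]
  have hinv :=
    cs.isRightInversion_of_mem_rightInvSeq hω' (mem_rightInvSeq_of_reflSign_eq_neg_one cs hsign')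
  rw [← hω'w] at hinv
  exact (h.1.isRightInversion_mul_left_iff.mp hinv) h

theorem exists_wordProd_eraseIdx_eq_mul {ω : List B} {t : W}
    (h : cs.IsRightInversion (π ω) t) : ∃ j < ω.length, π (ω.eraseIdx j) = π ω * t := by
  obtain ⟨j, hj, rfl⟩ := List.mem_iff_getElem.mp (mem_rightInvSeq_of_isRightInversion cs h)
  rw [cs.length_rightInvSeq] at hj
  refine ⟨j, hj, ?_⟩
  rw [← cs.wordProd_mul_getD_rightInvSeq, List.getD_eq_getElem]

theorem isRightInversion_mul_simple_of_ne {w t : W} {i : B} (h : cs.IsRightInversion w t)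
    (hne : t ≠ σ i) : cs.IsRightInversion (w * σ i) (σ i * t * σ i) := by
  obtain ⟨ω, hω, hωw⟩ := cs.exists_isReduced (w * σ i)
  have hw : π (ω.concat i) = w := by
    rw [List.concat_eq_append, cs.wordProd_append, ← hωw, cs.wordProd_singleton,
      simple_mul_simple_cancel_right]
  have ht := mem_rightInvSeq_of_isRightInversion cs (hw ▸ h)
  rw [rightInvSeq_concat, List.concat_eq_append, List.mem_append, List.mem_singleton,
    or_iff_left hne, List.mem_map] at ht
  obtain ⟨t', ht', rfl⟩ := ht
  rw [hωw]
  simpa [mul_assoc] using cs.isRightInversion_of_mem_rightInvSeq hω ht'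

theorem isReduced_concat_iff {ω : List B} {i : B} :
    cs.IsReduced (ω ++ [i]) ↔ cs.IsReduced ω ∧ ¬cs.IsRightDescent (π ω) i := by
  rw [CoxeterSystem.IsReduced, CoxeterSystem.IsReduced, cs.wordProd_append,
    cs.wordProd_singleton, List.length_append, List.length_singleton, not_isRightDescent_iff]
  have := cs.length_wordProd_le ω
  have := cs.length_mul_simple (π ω) i
  omega

theorem ContainsReducedWord.mono {Q Q' : List B} {ρ : W} (hQ : Q.Sublist Q')
    (h : ContainsReducedWord cs Q ρ) : ContainsReducedWord cs Q' ρ :=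
  let ⟨R, hR, hlen, hprod⟩ := h
  ⟨R, hR.trans hQ, hlen, hprod⟩

theorem containsReducedWord_concat_iff {Q : List B} {i : B} {ρ : W} :
    ContainsReducedWord cs (Q ++ [i]) ρ ↔ ContainsReducedWord cs Q ρ ∨
      (cs.IsRightDescent ρ i ∧ ContainsReducedWord cs Q (ρ * σ i)) := by
  constructor
  · rintro ⟨R, hR, hlen, rfl⟩
    obtain ⟨R₁, R₂, rfl, hR₁, hR₂⟩ := List.sublist_append_iff.mp hR
    rcases List.sublist_singleton.mp hR₂ with rfl | rfl
    · exact Or.inl ⟨R₁, hR₁, by simpa using hlen, by simp⟩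
    · have hred : cs.IsReduced (R₁ ++ [i]) := hlen.symm
      rw [isReduced_concat_iff, CoxeterSystem.IsReduced, not_isRightDescent_iff] at hred
      refine Or.inr ⟨?_, R₁, hR₁, ?_, ?_⟩
      · rw [isRightDescent_iff, cs.wordProd_append, cs.wordProd_singleton,
          simple_mul_simple_cancel_right]
        omega
      · rw [cs.wordProd_append, cs.wordProd_singleton, simple_mul_simple_cancel_right, hred.1]
      · rw [cs.wordProd_append, cs.wordProd_singleton, simple_mul_simple_cancel_right]
  · rintro (h | ⟨hρ, R, hR, hlen, hprod⟩)
    · exact h.mono cs (List.sublist_append_left Q [i])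
    · refine ⟨R ++ [i], hR.append (List.Sublist.refl [i]), ?_, ?_⟩
      · rw [isRightDescent_iff] at hρ
        simp only [List.length_append, List.length_singleton]
        omega
      · rw [cs.wordProd_append, cs.wordProd_singleton, hprod, simple_mul_simple_cancel_right]

theorem containsReducedWord_wordProd (ω : List B) : ContainsReducedWord cs ω (π ω) := by
  induction ω using List.reverseRecOn with
  | nil => exact ⟨[], List.Sublist.refl [], by simp, rfl⟩
  | append_singleton ω i ih =>
    obtain ⟨R, hR, hlen, hprod⟩ := ih
    rw [cs.wordProd_append, cs.wordProd_singleton]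
    by_cases hdesc : cs.IsRightDescent (π ω) i
    · have hinv : cs.IsRightInversion (π R) (σ i) := by
        rwa [hprod, isRightInversion_simple_iff_isRightDescent]
      obtain ⟨j, hj, hRj⟩ := exists_wordProd_eraseIdx_eq_mul cs hinv
      refine ⟨R.eraseIdx j, (R.eraseIdx_sublist j).trans (hR.trans (ω.sublist_append_left [i])),
        ?_, by rw [hRj, hprod]⟩
      rw [isRightDescent_iff] at hdesc
      rw [List.length_eraseIdx_of_lt hj]
      omega
    · refine ⟨R ++ [i], hR.append (List.Sublist.refl [i]), ?_, ?_⟩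
      · rw [not_isRightDescent_iff] at hdesc
        simp only [List.length_append, List.length_singleton]
        omega
      · rw [cs.wordProd_append, cs.wordProd_singleton, hprod]

def BruhatStep (u w : W) : Prop := ∃ t, cs.IsRightInversion w t ∧ u = w * t

def BruhatLE : W → W → Prop := Relation.ReflTransGen (BruhatStep cs)

theorem bruhatStep_mul_simple {w : W} {i : B} (h : ℓ w < ℓ (w * σ i)) :
    BruhatStep cs w (w * σ i) := by
  refine ⟨σ i, ?_, by rw [simple_mul_simple_cancel_right]⟩
  rwa [isRightInversion_simple_iff_isRightDescent, IsRightDescent, simple_mul_simple_cancel_right]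

theorem BruhatStep.mul_simple {v w : W} (i : B) (h : BruhatStep cs v w) :
    BruhatStep cs (v * σ i) (w * σ i) ∨ v * σ i = w := by
  obtain ⟨t, ht, rfl⟩ := h
  by_cases hne : t = σ i
  · exact Or.inr (by rw [hne, simple_mul_simple_cancel_right])
  · exact Or.inl
      ⟨σ i * t * σ i, isRightInversion_mul_simple_of_ne cs ht hne, by simp [mul_assoc]⟩

theorem BruhatLE.mul_simple {u w : W} (i : B) (h : BruhatLE cs u w) :
    BruhatLE cs (u * σ i) (w * σ i) ∨ BruhatLE cs (u * σ i) w := by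
  induction h with
  | refl => exact Or.inl .refl
  | tail _ hstep ih =>
    rcases ih with h | h
    · rcases hstep.mul_simple cs i with hstep' | heq
      · exact Or.inl (h.tail hstep')
      · exact Or.inr (heq ▸ h)
    · exact Or.inr (h.tail hstep)

theorem ContainsReducedWord.of_bruhatLE {ω : List B} {u : W} (h : BruhatLE cs u (π ω)) :
    ContainsReducedWord cs ω u := by
  generalize hw : π ω = w at h
  induction h generalizing ω with
  | refl => exact hw ▸ containsReducedWord_wordProd cs ω
  | tail _ hstep ih =>
    subst hw
    obtain ⟨t, ht, rfl⟩ := hstep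
    obtain ⟨j, -, hj⟩ := exists_wordProd_eraseIdx_eq_mul cs ht
    exact (ih hj).mono cs (ω.eraseIdx_sublist j)

theorem ContainsReducedWord.bruhatLE {D : List B} {ρ : W} (hD : cs.IsReduced D)
    (h : ContainsReducedWord cs D ρ) : BruhatLE cs ρ (π D) := by
  induction D using List.reverseRecOn generalizing ρ with
  | nil =>
    obtain ⟨R, hR, -, rfl⟩ := h
    rw [List.sublist_nil.mp hR]
    exact .refl
  | append_singleton E i ih =>
    obtain ⟨hE, hasc⟩ := (isReduced_concat_iff cs).mp hD
    rw [not_isRightDescent_iff] at hasc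
    have hstep := bruhatStep_mul_simple cs (w := π E) (i := i) (by omega)
    rw [cs.wordProd_append, cs.wordProd_singleton]
    rcases (containsReducedWord_concat_iff cs).mp h with h | ⟨-, h⟩
    · exact (ih hE h).tail hstep
    · rcases (ih hE h).mul_simple cs i with h' | h'
      · rwa [simple_mul_simple_cancel_right] at h'
      · rw [simple_mul_simple_cancel_right] at h'
        exact h'.tail hstep

theorem containsReducedWord_iff_bruhatLE {D : List B} {ρ : W} (hD : cs.IsReduced D) :
    ContainsReducedWord cs D ρ ↔ BruhatLE cs ρ (π D) :=
  ⟨ContainsReducedWord.bruhatLE cs hD, ContainsReducedWord.of_bruhatLE cs⟩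

theorem bruhatLE_iff_of_isRightDescent {w ρ : W} {i : B} (hw : cs.IsRightDescent w i) :
    BruhatLE cs ρ w ↔ BruhatLE cs ρ (w * σ i) ∨
      (cs.IsRightDescent ρ i ∧ BruhatLE cs (ρ * σ i) (w * σ i)) := by
  obtain ⟨E, hE, hEw⟩ := cs.exists_isReduced (w * σ i)
  have hD : cs.IsReduced (E ++ [i]) := by
    rw [isReduced_concat_iff, ← hEw, ← isRightDescent_iff_not_isRightDescent_mul]
    exact ⟨hE, hw⟩
  have hDw : π (E ++ [i]) = w := by
    rw [cs.wordProd_append, cs.wordProd_singleton, ← hEw, simple_mul_simple_cancel_right]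
  rw [hEw, ← containsReducedWord_iff_bruhatLE cs hE, ← containsReducedWord_iff_bruhatLE cs hE,
    ← containsReducedWord_concat_iff, containsReducedWord_iff_bruhatLE cs hD, hDw]

theorem bruhatLE_demazureStep_iff {w ρ : W} {i : B} :
    BruhatLE cs ρ (demazureStep cs w i) ↔
      BruhatLE cs ρ w ∨ (cs.IsRightDescent ρ i ∧ BruhatLE cs (ρ * σ i) w) := by
  unfold demazureStep
  split_ifs with hasc
  · have hdesc : cs.IsRightDescent (w * σ i) i := by
      rwa [IsRightDescent, simple_mul_simple_cancel_right]
    simpa using bruhatLE_iff_of_isRightDescent cs hdesc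
  · have hdesc : cs.IsRightDescent w i :=
      lt_of_le_of_ne (not_lt.mp hasc) (cs.length_mul_simple_ne w i)
    refine ⟨Or.inl, ?_⟩
    rintro (h | ⟨hρ, h⟩)
    · exact h
    · refine (bruhatLE_iff_of_isRightDescent cs hdesc).mpr (Or.inr ⟨hρ, ?_⟩)
      rcases (bruhatLE_iff_of_isRightDescent cs hdesc).mp h with h | ⟨hρ', -⟩
      · exact h
      · exact absurd hρ' (cs.isRightDescent_iff_not_isRightDescent_mul.mp hρ)

theorem demazure_concat (Q : List B) (i : B) :
    demazure cs (Q ++ [i]) = demazureStep cs (demazure cs Q) i := by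
  simp [demazure]

theorem containsReducedWord_iff_bruhatLE_demazure (Q : List B) (ρ : W) :
    ContainsReducedWord cs Q ρ ↔ BruhatLE cs ρ (demazure cs Q) := by
  induction Q using List.reverseRecOn generalizing ρ with
  | nil => exact containsReducedWord_iff_bruhatLE cs (D := []) (by simp [CoxeterSystem.IsReduced])
  | append_singleton Q i ih =>
    rw [containsReducedWord_concat_iff, ih, ih, demazure_concat, bruhatLE_demazureStep_iff]

end

theorem containsReduced_iff_demazure_containsReduced_general
    (cs : CoxeterSystem M W) (Q : List B) (ρ : W) :
    ContainsReducedWord cs Q ρ ↔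
      ∃ D : List B, D.length = cs.length (demazure cs Q) ∧
        cs.wordProd D = demazure cs Q ∧ ContainsReducedWord cs D ρ := by
  rw [containsReducedWord_iff_bruhatLE_demazure]
  constructor
  · intro h
    obtain ⟨D, hD, hDw⟩ := cs.exists_isReduced (demazure cs Q)
    refine ⟨D, by rw [hDw, hD], hDw.symm, ?_⟩
    rwa [containsReducedWord_iff_bruhatLE cs hD, ← hDw]
  · rintro ⟨D, hlen, hDw, h⟩
    have hD : cs.IsReduced D := by rw [CoxeterSystem.IsReduced, hDw, hlen]
    rwa [containsReducedWord_iff_bruhatLE cs hD, hDw] at h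

/-- `Q` contains a reduced expression of `ρ` as a subword iff some reduced word for
the Demazure product `δ(Q)` contains a reduced expression of `ρ` as a subword. -/
theorem containsReduced_iff_demazure_containsReduced [Finite W]
    (cs : CoxeterSystem M W) (Q : List B) (ρ : W) :
    ContainsReducedWord cs Q ρ ↔
      ∃ D : List B, D.length = cs.length (demazure cs Q) ∧
        cs.wordProd D = demazure cs Q ∧ ContainsReducedWord cs D ρ :=
  containsReduced_iff_demazure_containsReduced_general cs Q ρ

end SubwordComplexNil
end

section
/- (Word Property) Let (W,S) be a finite Coxeter system and let w ∈ W. Any word in the simple reflections S whose letters multiply to w can be transformed into a reduced word for w by a finite sequence of nil-moves (deleting two consecutive identical letters s s) and braid moves (replacing a consecutive alternating subword s_i s_j s_i s_j … of length m_{ij} by s_j s_i s_j s_i … of the same length, where m_{ij} is the order of s_i s_j in W). -/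
/-!
Tits' permutation representation `(t, ε) ↦ (s_i t s_i, ε + [t = s_i])` of `W` on `W × ZMod 2`
shows that the parity of the number of occurrences of `t` in the right inversion sequence of a
word depends only on the element the word expresses. As the inversion sequence of a reduced word
has no repetitions, this yields the exchange condition, and also that the alternating word
`⋯ s_i s_j` of length at most `m_ij` is reduced.

If `s_i` and `s_j` are both right descents of `w`, repeated exchanges therefore produce a reduced
word for `w` ending in the alternating word of length `m_ij`; in particular `m_ij` is finite.
Matsumoto's theorem follows by induction on the length: two reduced words for `w` ending in `i`
and in `j` are connected, through the induction hypothesis, to the two reduced words ending in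
the two alternating words of length `m_ij`, which differ by a single braid move. Finally a word
`a :: T` is handled by first moving `T` to a reduced word `R`: if `a :: R` is not reduced,
Matsumoto's theorem moves `R` to a reduced word starting with `a`, and a nil-move finishes.
-/

namespace CoxeterSystem

open List

variable {B W : Type*} [Group W] {M : CoxeterMatrix B} (cs : CoxeterSystem M W)

local prefix:100 "s" => cs.simple
local prefix:100 "π" => cs.wordProd
local prefix:100 "ℓ" => cs.length
local prefix:100 "ris " => cs.rightInvSeq

theorem alternatingWord_two_mul_succ (i j : B) (k : ℕ) :
    alternatingWord i j (2 * (k + 1)) = alternatingWord i j (2 * k) ++ [i, j] := by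
  rw [show 2 * (k + 1) = 2 * k + 1 + 1 by ring, alternatingWord_succ, alternatingWord_succ]
  simp

theorem prod_map_alternatingWord_two_mul {G : Type*} [Monoid G] (f : B → G) (i j : B) (k : ℕ) :
    ((alternatingWord i j (2 * k)).map f).prod = (f i * f j) ^ k := by
  induction k with
  | zero => simp [alternatingWord]
  | succ k ih => simp [alternatingWord_two_mul_succ, ih, pow_succ]

theorem wordProd_alternatingWord_inv_mul (i j : B) (n : ℕ) :
    (π alternatingWord j i n)⁻¹ * π alternatingWord i j n = (s i * s j) ^ n := by
  induction n generalizing i j with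
  | zero => simp [alternatingWord]
  | succ n ih =>
    rw [alternatingWord_succ, alternatingWord_succ, wordProd_concat, wordProd_concat,
      mul_inv_rev, inv_simple, mul_assoc, ← mul_assoc _ _ (s j), ih j i, ← mul_assoc,
      ← mul_pow_mul, pow_succ, mul_assoc]

theorem wordProd_alternatingWord_eq_iff (i j : B) (n : ℕ) :
    π alternatingWord i j n = π alternatingWord j i n ↔ (s i * s j) ^ n = 1 := by
  rw [← wordProd_alternatingWord_inv_mul, inv_mul_eq_one, eq_comm]

theorem rightInvSeq_alternatingWord (i j : B) (n : ℕ) :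
    ris alternatingWord i j n = ((range n).map fun q ↦ s j * (s i * s j) ^ q).reverse := by
  induction n generalizing i j with
  | zero => rfl
  | succ n ih =>
    have conj_eq (q : ℕ) :
        MulAut.conj (s j) (s i * (s j * s i) ^ q) = s j * (s i * s j) ^ (q + 1) := by
      rw [MulAut.conj_apply, inv_simple, ← mul_pow_mul, pow_succ]
      group
    rw [alternatingWord_succ, rightInvSeq_concat, ih, range_succ_eq_map]
    simp [map_reverse, conj_eq]

theorem even_count_rightInvSeq_alternatingWord [DecidableEq W] (i j : B) {m : ℕ}
    (hm : (s i * s j) ^ m = 1) (t : W) :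
    Even ((ris alternatingWord i j (2 * m)).count t) := by
  have periodic : (fun q ↦ s j * (s i * s j) ^ (m + q)) = fun q ↦ s j * (s i * s j) ^ q := by
    simp [pow_add, hm]
  rw [rightInvSeq_alternatingWord, count_reverse, two_mul, range_add, map_append, map_map,
    Function.comp_def, periodic, count_append]
  exact Even.add_self _

section ParityRepresentation

variable [DecidableEq W]

def conjParityPerm (i : B) : Equiv.Perm (W × ZMod 2) :=
  Function.Involutive.toPerm (fun p ↦ (s i * p.1 * s i, p.2 + if p.1 = s i then 1 else 0)) <| by
    rintro ⟨t, ε⟩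
    have conj_conj : s i * (s i * t * s i) * s i = t := by
      simp only [← mul_assoc, simple_mul_simple_self, one_mul, simple_mul_simple_cancel_right]
    have conj_eq_simple_iff : s i * t * s i = s i ↔ t = s i := by
      constructor
      · intro h
        rw [← conj_conj, h, simple_mul_simple_self, one_mul]
      · rintro rfl
        rw [simple_mul_simple_self, one_mul]
    refine Prod.ext conj_conj ?_
    dsimp only
    rw [if_congr conj_eq_simple_iff rfl rfl, add_assoc, CharTwo.add_self_eq_zero, add_zero]

theorem prod_map_conjParityPerm_apply (ω : List B) (t : W) (ε : ZMod 2) :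
    (ω.map cs.conjParityPerm).prod (t, ε) =
      (π ω * t * (π ω)⁻¹, ε + (ris ω).count t) := by
  induction ω generalizing ε with
  | nil => simp
  | cons i ω ih =>
    have hconj : (π ω)⁻¹ * (s i * π ω) = t ↔ π ω * (t * (π ω)⁻¹) = s i := by
      constructor
      · rintro rfl
        group
      · intro h
        rw [← h]
        group
    rw [map_cons, prod_cons, Equiv.Perm.mul_apply, ih]
    refine Prod.ext ?_ ?_
    · simp [conjParityPerm, wordProd_cons, mul_assoc]
    · simp [conjParityPerm, rightInvSeq, count_cons, mul_assoc, hconj, add_assoc]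

theorem isLiftable_conjParityPerm : M.IsLiftable cs.conjParityPerm := by
  intro i j
  ext ⟨t, ε⟩ : 1
  rw [← prod_map_alternatingWord_two_mul, prod_map_conjParityPerm_apply]
  have hprod : π alternatingWord i j (2 * M i j) = 1 := by
    rw [wordProd, prod_map_alternatingWord_two_mul, simple_mul_simple_pow]
  have hcount := (ZMod.natCast_eq_zero_iff_even).mpr
    (cs.even_count_rightInvSeq_alternatingWord i j (cs.simple_mul_simple_pow i j) t)
  simp [hprod, hcount]

theorem count_rightInvSeq_mod_two_eq {ω ω' : List B} (h : π ω = π ω') (t : W) :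
    (ris ω).count t % 2 = (ris ω').count t % 2 := by
  rw [← ZMod.natCast_eq_natCast_iff']
  let φ := cs.lift ⟨cs.conjParityPerm, cs.isLiftable_conjParityPerm⟩
  have hφ (ω : List B) : φ (π ω) = (ω.map cs.conjParityPerm).prod := by
    rw [wordProd, map_list_prod, map_map]
    congr 2
    funext i
    exact cs.lift_apply_simple cs.isLiftable_conjParityPerm i
  have := congr_arg (fun w ↦ (φ w (t, 0)).2) h
  simpa only [hφ, prod_map_conjParityPerm_apply, zero_add] using this

end ParityRepresentation

theorem mem_rightInvSeq_of_wordProd_eq {ω ω' : List B} (h : π ω = π ω') (hω : (ris ω).Nodup)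
    {t : W} (ht : t ∈ ris ω) : t ∈ ris ω' := by
  classical
  have hcount := cs.count_rightInvSeq_mod_two_eq h t
  rw [count_eq_one_of_mem hω ht] at hcount
  exact count_pos_iff.mp (by omega)

theorem isReduced_of_nodup_rightInvSeq {ω : List B} (hω : (ris ω).Nodup) : cs.IsReduced ω := by
  obtain ⟨τ, hτ, hτω⟩ := cs.exists_isReduced (π ω)
  have hsub : ris ω ⊆ ris τ := fun t ht ↦ cs.mem_rightInvSeq_of_wordProd_eq hτω hω ht
  have hle := hω.length_le_of_subset hsub
  rw [length_rightInvSeq, length_rightInvSeq, ← hτ.eq, ← hτω] at hle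
  exact le_antisymm (cs.length_wordProd_le ω) hle

theorem exists_wordProd_eraseIdx_of_isRightDescent {ω : List B} {i : B}
    (hi : cs.IsRightDescent (π ω) i) :
    ∃ k < ω.length, π ω * s i = π (ω.eraseIdx k) := by
  obtain ⟨τ, hτ, hτω⟩ := cs.exists_isReduced (π ω * s i)
  have hτi : π (τ.concat i) = π ω := by
    rw [wordProd_concat, ← hτω, simple_mul_simple_cancel_right]
  have hτi_reduced : cs.IsReduced (τ.concat i) := by
    have := cs.isRightDescent_iff.mp hi
    rw [IsReduced, hτi, length_concat, ← hτ.eq, ← hτω]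
    omega
  have hmem : s i ∈ ris (τ.concat i) := by
    rw [rightInvSeq_concat, concat_eq_append]
    exact mem_concat_self
  obtain ⟨k, hk, hk_eq⟩ := List.mem_iff_getElem.mp
    (cs.mem_rightInvSeq_of_wordProd_eq hτi hτi_reduced.nodup_rightInvSeq hmem)
  rw [length_rightInvSeq] at hk
  refine ⟨k, hk, ?_⟩
  rw [← wordProd_mul_getD_rightInvSeq, getD_eq_getElem _ _ (by simpa using hk), hk_eq]

theorem IsReduced.isRightDescent_append_singleton {X : List B} {d : B}
    (h : cs.IsReduced (X ++ [d])) : cs.IsRightDescent (π (X ++ [d])) d := by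
  have hXd : π (X ++ [d]) * s d = π X := by
    rw [wordProd_append, wordProd_singleton, simple_mul_simple_cancel_right]
  have := cs.length_wordProd_le X
  rw [IsRightDescent, hXd, h.eq, length_append, length_singleton]
  omega

theorem isReduced_alternatingWord {i j : B} {n : ℕ}
    (hn : n ≤ orderOf (s i * s j) ∨ orderOf (s i * s j) = 0) :
    cs.IsReduced (alternatingWord i j n) := by
  refine cs.isReduced_of_nodup_rightInvSeq ?_
  rw [rightInvSeq_alternatingWord, nodup_reverse]
  refine nodup_range.map_on fun a ha b hb hab ↦ ?_
  rw [mul_right_inj, pow_inj_mod] at hab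
  rw [mem_range] at ha hb
  rcases hn with hn | hn
  · rwa [Nat.mod_eq_of_lt (ha.trans_le hn), Nat.mod_eq_of_lt (hb.trans_le hn)] at hab
  · rwa [hn, Nat.mod_zero, Nat.mod_zero] at hab

theorem orderOf_simple_mul_simple_comm (i j : B) : orderOf (s j * s i) = orderOf (s i * s j) := by
  rw [← orderOf_inv, mul_inv_rev, inv_simple, inv_simple]

theorem exists_isReduced_append_alternatingWord {w : W} {i j : B}
    (hi : cs.IsRightDescent w i) (hj : cs.IsRightDescent w j) {p : ℕ}
    (hp : p ≤ orderOf (s i * s j) ∨ orderOf (s i * s j) = 0) :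
    ∃ V : List B, cs.IsReduced (V ++ alternatingWord i j p) ∧
      π (V ++ alternatingWord i j p) = w := by
  induction p generalizing i j with
  | zero =>
    obtain ⟨V, hV, rfl⟩ := cs.exists_isReduced w
    exact ⟨V, by simpa [alternatingWord] using hV, by simp [alternatingWord]⟩
  | succ p ih =>
    obtain ⟨V, hred, rfl⟩ := ih hj hi (by rw [orderOf_simple_mul_simple_comm]; omega)
    obtain ⟨k, hk, hk_eq⟩ := cs.exists_wordProd_eraseIdx_of_isRightDescent hj
    have hlen := hred.eq
    rw [length_append, length_alternatingWord] at hk hlen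
    rcases lt_or_ge k V.length with hkV | hkV
    · have hprod :
          π (V.eraseIdx k ++ alternatingWord i j (p + 1)) = π (V ++ alternatingWord j i p) := by
        rw [alternatingWord_succ, concat_eq_append, ← append_assoc, wordProd_append,
          ← eraseIdx_append_of_lt_length hkV, ← hk_eq, wordProd_singleton,
          simple_mul_simple_cancel_right]
      refine ⟨V.eraseIdx k, ?_, hprod⟩
      rw [IsReduced, hprod, hlen, length_append, length_eraseIdx_of_lt hkV, length_alternatingWord]
      omega
    · -- The deleted letter cannot lie in the alternating suffix, which is reduced.
      rw [eraseIdx_append_of_length_le hkV, wordProd_append, wordProd_append, mul_assoc,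
        mul_right_inj] at hk_eq
      have hshort : ℓ (π alternatingWord i j (p + 1)) ≤ p - 1 := by
        rw [alternatingWord_succ, wordProd_concat, hk_eq]
        refine (cs.length_wordProd_le _).trans ?_
        rw [length_eraseIdx_of_lt (by rw [length_alternatingWord]; omega), length_alternatingWord]
      have := (cs.isReduced_alternatingWord hp).eq
      rw [length_alternatingWord] at this
      omega

theorem orderOf_simple_mul_simple_ne_zero_of_isRightDescent {w : W} {i j : B}
    (hi : cs.IsRightDescent w i) (hj : cs.IsRightDescent w j) : orderOf (s i * s j) ≠ 0 := by
  intro h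
  obtain ⟨V, hred, hV⟩ :=
    cs.exists_isReduced_append_alternatingWord hi hj (p := ℓ w + 1) (Or.inr h)
  have := hred.eq
  rw [hV, length_append, length_alternatingWord] at this
  omega

end CoxeterSystem

namespace SubwordComplexNil

variable {B W : Type*} [Group W] {M : CoxeterMatrix B}

/-- Elementary moves on words in the simple reflections: a nil-move deletes two
consecutive identical letters, and a braid move replaces a consecutive alternating
subword `s_i s_j s_i …` of length `m_{ij} = orderOf (s_i * s_j)` by the alternating
subword `s_j s_i s_j …` of the same length. -/
inductive ElemMove (cs : CoxeterSystem M W) : List B → List B → Prop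
  | nil_move (l₁ l₂ : List B) (i : B) : ElemMove cs (l₁ ++ i :: i :: l₂) (l₁ ++ l₂)
  | braid_move (l₁ l₂ : List B) (i j : B) :
      ElemMove cs
        (l₁ ++ CoxeterSystem.alternatingWord i j (orderOf (cs.simple i * cs.simple j))
          ++ l₂)
        (l₁ ++ CoxeterSystem.alternatingWord j i (orderOf (cs.simple i * cs.simple j))
          ++ l₂)

section

open CoxeterSystem List

variable {cs : CoxeterSystem M W}

local prefix:100 "s" => cs.simple
local prefix:100 "π" => cs.wordProd

theorem ElemMove.wordProd_eq {Q R : List B} (h : ElemMove cs Q R) : π Q = π R := by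
  cases h with
  | nil_move l₁ l₂ i => simp [wordProd_append, wordProd_cons, simple_mul_simple_cancel_left]
  | braid_move l₁ l₂ i j =>
    rw [wordProd_append, wordProd_append, wordProd_append, wordProd_append,
      (cs.wordProd_alternatingWord_eq_iff i j _).mpr (pow_orderOf_eq_one _)]

theorem ElemMove.append_append {Q R : List B} (h : ElemMove cs Q R) (l l' : List B) :
    ElemMove cs (l ++ Q ++ l') (l ++ R ++ l') := by
  cases h with
  | nil_move l₁ l₂ i => simpa using ElemMove.nil_move (cs := cs) (l ++ l₁) (l₂ ++ l') i
  | braid_move l₁ l₂ i j =>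
    simpa using ElemMove.braid_move (cs := cs) (l ++ l₁) (l₂ ++ l') i j

theorem wordProd_eq_of_reflTransGen {Q R : List B} (h : Relation.ReflTransGen (ElemMove cs) Q R) :
    π Q = π R := by
  induction h with
  | refl => rfl
  | tail _ hmove ih => exact ih.trans hmove.wordProd_eq

theorem reflTransGen_append_append {Q R : List B} (h : Relation.ReflTransGen (ElemMove cs) Q R)
    (l l' : List B) : Relation.ReflTransGen (ElemMove cs) (l ++ Q ++ l') (l ++ R ++ l') :=
  Relation.ReflTransGen.lift (fun Z ↦ l ++ Z ++ l') (fun _ _ hmove ↦ hmove.append_append l l')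
    Q R h

theorem exists_elemMove_of_isRightDescent {w : W} {a a' : B} (ha : cs.IsRightDescent w a)
    (ha' : cs.IsRightDescent w a') :
    ∃ X Y : List B, cs.IsReduced (X ++ [a]) ∧ π (X ++ [a]) = w ∧
      cs.IsReduced (Y ++ [a']) ∧ π (Y ++ [a']) = w ∧ ElemMove cs (X ++ [a]) (Y ++ [a']) := by
  obtain ⟨q, hq⟩ := Nat.exists_eq_add_one_of_ne_zero
    (cs.orderOf_simple_mul_simple_ne_zero_of_isRightDescent ha' ha)
  obtain ⟨V, hP, hPw⟩ := cs.exists_isReduced_append_alternatingWord ha' ha (Or.inl le_rfl)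
  have braid := ElemMove.braid_move (cs := cs) V [] a' a
  rw [append_nil, append_nil] at braid
  have hP'w : π (V ++ alternatingWord a a' (orderOf (s a' * s a))) = w :=
    braid.wordProd_eq ▸ hPw
  have hP' : cs.IsReduced (V ++ alternatingWord a a' (orderOf (s a' * s a))) := by
    rw [CoxeterSystem.IsReduced, hP'w, ← hPw, hP.eq]
    simp
  simp only [hq, alternatingWord_succ, concat_eq_append, ← append_assoc]
    at hP hPw hP'w hP' braid
  exact ⟨_, _, hP, hPw, hP', hP'w, braid⟩

theorem reflTransGen_of_isReduced {Q Q' : List B} (hQ : cs.IsReduced Q) (hQ' : cs.IsReduced Q')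
    (h : π Q = π Q') : Relation.ReflTransGen (ElemMove cs) Q Q' := by
  obtain ⟨n, hn⟩ : ∃ n, Q.length = n := ⟨_, rfl⟩
  induction n generalizing Q Q' with
  | zero =>
    have hn' : Q'.length = 0 := by rw [← hQ'.eq, ← h, hQ.eq, hn]
    rw [length_eq_zero_iff.mp hn, length_eq_zero_iff.mp hn']
  | succ n ih =>
    have glue {X Y : List B} {d : B} (hX : cs.IsReduced (X ++ [d])) (hY : cs.IsReduced (Y ++ [d]))
        (hXQ : π (X ++ [d]) = π Q) (hYQ : π (Y ++ [d]) = π Q) :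
        Relation.ReflTransGen (ElemMove cs) (X ++ [d]) (Y ++ [d]) := by
      have hXn : X.length = n := by
        have := hX.eq
        rw [hXQ, hQ.eq, hn, length_append, length_singleton] at this
        omega
      rw [← hYQ, wordProd_append, wordProd_append, mul_left_inj] at hXQ
      simpa using reflTransGen_append_append
        (ih (by simpa using hX.take X.length) (by simpa using hY.take Y.length) hXQ hXn) [] [d]
    obtain ⟨T, a, rfl⟩ := (eq_nil_or_concat' Q).resolve_left (by rintro rfl; simp at hn)
    obtain ⟨T', a', rfl⟩ := (eq_nil_or_concat' Q').resolve_left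
      (by rintro rfl; have := hQ.eq; rw [h, hn] at this; simp at this)
    have ha' := hQ'.isRightDescent_append_singleton
    rw [← h] at ha'
    obtain ⟨X, Y, hX, hXw, hY, hYw, hmove⟩ :=
      exists_elemMove_of_isRightDescent hQ.isRightDescent_append_singleton ha'
    exact ((glue hQ hX rfl hXw).tail hmove).trans (glue hY hQ' hYw h.symm)

theorem exists_reflTransGen_isReduced (Q : List B) :
    ∃ R, Relation.ReflTransGen (ElemMove cs) Q R ∧ cs.IsReduced R := by
  induction Q with
  | nil => exact ⟨[], .refl, by simp [CoxeterSystem.IsReduced]⟩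
  | cons a T ih =>
    obtain ⟨R, hTR, hR⟩ := ih
    have haTR : Relation.ReflTransGen (ElemMove cs) (a :: T) (a :: R) := by
      simpa using reflTransGen_append_append hTR [a] []
    rcases cs.length_simple_mul (π R) a with hlonger | hshorter
    · refine ⟨a :: R, haTR, ?_⟩
      rw [CoxeterSystem.IsReduced, wordProd_cons, hlonger, hR.eq, length_cons]
    · obtain ⟨τ, hτ, hτR⟩ := cs.exists_isReduced (s a * π R)
      have haτ : π (a :: τ) = π R := by
        rw [wordProd_cons, ← hτR, simple_mul_simple_cancel_left]
      have haτ_reduced : cs.IsReduced (a :: τ) := by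
        rw [CoxeterSystem.IsReduced, haτ, length_cons, ← hτ.eq, ← hτR]
        omega
      have haRaaτ : Relation.ReflTransGen (ElemMove cs) (a :: R) (a :: a :: τ) := by
        simpa using reflTransGen_append_append
          (reflTransGen_of_isReduced hR haτ_reduced haτ.symm) [a] []
      have hnil : ElemMove cs (a :: a :: τ) τ := by
        simpa using ElemMove.nil_move (cs := cs) [] τ a
      exact ⟨τ, (haTR.trans haRaaτ).tail hnil, hτ⟩

end

theorem word_property_general (cs : CoxeterSystem M W) (w : W) (Q : List B)
    (hQ : cs.wordProd Q = w) :
    ∃ R : List B, Relation.ReflTransGen (ElemMove cs) Q R ∧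
      R.length = cs.length w ∧ cs.wordProd R = w := by
  obtain ⟨R, hQR, hR⟩ := exists_reflTransGen_isReduced (cs := cs) Q
  have hRw : cs.wordProd R = w := (wordProd_eq_of_reflTransGen hQR).symm.trans hQ
  exact ⟨R, hQR, by rw [← hRw, hR.eq], hRw⟩

/-- **Word Property.**  Any word expressing `w` can be transformed into a reduced word
for `w` by a finite sequence of nil-moves and braid moves. -/
theorem word_property [Finite W] (cs : CoxeterSystem M W) (w : W) (Q : List B)
    (hQ : cs.wordProd Q = w) :
    ∃ R : List B, Relation.ReflTransGen (ElemMove cs) Q R ∧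
      R.length = cs.length w ∧ cs.wordProd R = w :=
  word_property_general cs w Q hQ

end SubwordComplexNil
end
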